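/- Let n and ℓ be positive integers such that ℓ divides n − ⌈log₄ n⌉ − 3, let k = (n − ⌈log₄ n⌉ − 3)/ℓ, let ε = 4(⌈log₄ n⌉ + ℓ + 3), and let T be an integer with ε < T ≤ 4n such that ℓ divides T − ε. Set m = ⌊log₂ A(k, (T−ε)/ℓ)⌋ and assume m ≥ 1 and n is sufficiently large. Then there exists an (n,T,B)-synthesis code C ⊆ Σ^n with |C| ≥ 2^{ℓm}; equivalently, there is an injective encoder from {0,1}^{ℓm} into an (n,T,B)-synthesis code, with redundancy 2n − ℓ⌊log₂ A(k,(T−ε)/ℓ)⌋ bits. -/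

import Mathlib

/-- A list of integers is quaternary if all entries lie in {1,2,3,4}. -/
def IsQ (x : List ℤ) : Prop := ∀ a ∈ x, 1 ≤ a ∧ a ≤ 4

/-- The alternating quaternary supersequence 1,2,3,4,1,2,3,4,... of length `T`. -/
def altSeq (T : ℕ) : List ℤ := (List.range T).map (fun i => ((i % 4 : ℕ) : ℤ) + 1)

/-- The synthesis time of `x`: the least `T` such that `x` is a subsequence of `altSeq T`. -/
noncomputable def synTime (x : List ℤ) : ℕ := sInf {T : ℕ | x.Sublist (altSeq T)}

/-- The shifted modulo: the unique element of {1,2,3,4} congruent to `a` mod 4. -/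
def mods4 (a : ℤ) : ℤ := (a - 1) % 4 + 1

/-- The differential word of `x`. -/
def diffWord (x : List ℤ) : List ℤ := List.zipWith (fun p c => mods4 (c - p)) (0 :: x) x

/-- The set of quaternary words of length `n` with synthesis time at most `T`. -/
def W (n : ℕ) (T : ℤ) : Set (List ℤ) :=
  {x | x.length = n ∧ IsQ x ∧ (synTime x : ℤ) ≤ T}

/-- `A n T` is the number of quaternary words of length `n` with synthesis time at most `T`. -/
noncomputable def A (n : ℕ) (T : ℤ) : ℕ := (W n T).ncard

/-- The single-indel ball of `x`. -/
def ball (x : List ℤ) : Set (List ℤ) :=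
  {y | y = x ∨ (y.length + 1 = x.length ∧ y.Sublist x) ∨
       (x.length + 1 = y.length ∧ IsQ y ∧ x.Sublist y)}

/-- The auxiliary binary sequence of `x` (as 0/1 naturals). -/
def auxSeq (x : List ℤ) : List ℕ :=
  List.zipWith (fun a b => if a ≤ b then 1 else 0) x x.tail

/-- VT syndrome of a binary word: `∑ i·w_i` with positions starting from 1. -/
def vtSyn (w : List ℕ) : ℕ := ∑ i ∈ Finset.range w.length, (i + 1) * w.getD i 0

/-- The quaternary VT code. -/
def VTn (n : ℕ) (a : ZMod n) (b : ZMod 4) : Set (List ℤ) :=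
  {x | x.length = n ∧ IsQ x ∧ ((vtSyn (auxSeq x) : ℕ) : ZMod n) = a ∧
       ((x.sum : ℤ) : ZMod 4) = b}

/-- The quaternary VT code with synthesis time constraint. -/
def VTnT (n : ℕ) (a : ZMod n) (b : ZMod 4) (T : ℤ) : Set (List ℤ) :=
  {x ∈ VTn n a b | (synTime x : ℤ) ≤ T}

/-!
Concatenating words that are subsequences of alternating sequences costs at most 3 extra
symbols per junction (to realign the phase mod 4), so `ℓ` blocks from `W(k, t)` followed by
`⌈log₄ n⌉ + 3` arbitrary symbols show `4n · (2^m)^ℓ ≤ 4^(⌈log₄ n⌉+3) · A(k,t)^ℓ ≤ A(n,T)`.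
Splitting `W(n,T)` along the `4n` classes of Tenengolts' quaternary VT code, some class has at
least `2^(ℓm)` words. Each class corrects one deletion: the sum mod 4 recovers the deleted
symbol, the binary VT syndrome recovers the auxiliary sequence (Levenshtein), and equal
auxiliary sequences force the two candidate positions into a run of that symbol. A code
correcting one deletion also has pairwise disjoint single-indel balls.
-/

open scoped List

lemma altSeq_add (a b : ℕ) :
    altSeq (a + b) = altSeq a ++ (List.range b).map (fun i => (((a + i) % 4 : ℕ) : ℤ) + 1) := by
  simp [altSeq, List.range_add, Function.comp_def]

lemma altSeq_prefix {a b : ℕ} (h : a ≤ b) : altSeq a <+: altSeq b := by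
  obtain ⟨d, rfl⟩ := Nat.exists_eq_add_of_le h
  rw [altSeq_add]
  exact List.prefix_append _ _

lemma altSeq_four_mul_add (q b : ℕ) : altSeq (4 * q + b) = altSeq (4 * q) ++ altSeq b := by
  rw [altSeq_add]
  simp [altSeq, Nat.add_mod]

/-- Padding the first part up to a multiple of 4 costs at most 3 symbols. -/
lemma append_sublist_altSeq {p q : List ℤ} {a b : ℕ} (hp : p <+ altSeq a) (hq : q <+ altSeq b) :
    p ++ q <+ altSeq (a + 3 + b) := by
  have hpad : a ≤ 4 * ((a + 3) / 4) := by omega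
  calc p ++ q <+ altSeq (4 * ((a + 3) / 4)) ++ altSeq b :=
        (hp.trans (altSeq_prefix hpad).sublist).append hq
    _ = altSeq (4 * ((a + 3) / 4) + b) := (altSeq_four_mul_add _ _).symm
    _ <+ altSeq (a + 3 + b) := (altSeq_prefix (by omega)).sublist

lemma IsQ.sublist_altSeq {x : List ℤ} (hx : IsQ x) : x <+ altSeq (4 * x.length) := by
  induction x with
  | nil => exact List.nil_sublist _
  | cons a x ih =>
    obtain ⟨ha1, ha4⟩ := hx a List.mem_cons_self
    have ha : [a] <+ altSeq 4 := by
      rw [List.singleton_sublist]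
      interval_cases a <;> decide
    calc a :: x = [a] ++ x := rfl
      _ <+ altSeq (4 * 1) ++ altSeq (4 * x.length) :=
        ha.append (ih fun b hb => hx b (List.mem_cons_of_mem a hb))
      _ = altSeq (4 * (a :: x).length) := by
        rw [← altSeq_four_mul_add, List.length_cons]; ring_nf

lemma synTime_le_of_sublist {x : List ℤ} {T : ℕ} (h : x <+ altSeq T) : synTime x ≤ T :=
  Nat.sInf_le h

lemma IsQ.sublist_altSeq_synTime {x : List ℤ} (hx : IsQ x) : x <+ altSeq (synTime x) :=
  Nat.sInf_mem (s := {T | x <+ altSeq T}) ⟨_, hx.sublist_altSeq⟩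

lemma IsQ.synTime_le {x : List ℤ} (hx : IsQ x) : synTime x ≤ 4 * x.length :=
  synTime_le_of_sublist hx.sublist_altSeq

lemma IsQ.append {x y : List ℤ} (hx : IsQ x) (hy : IsQ y) : IsQ (x ++ y) := by
  intro a ha
  rcases List.mem_append.mp ha with h | h
  exacts [hx a h, hy a h]

lemma synTime_append_le {x y : List ℤ} (hx : IsQ x) (hy : IsQ y) :
    synTime (x ++ y) ≤ synTime x + 3 + synTime y :=
  synTime_le_of_sublist (append_sublist_altSeq hx.sublist_altSeq_synTime hy.sublist_altSeq_synTime)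

lemma W_finite (n : ℕ) (T : ℤ) : (W n T).Finite := by
  refine (altSeq (4 * n)).sublists.toFinset.finite_toSet.subset ?_
  rintro x ⟨rfl, hx, -⟩
  simpa using hx.sublist_altSeq

lemma A_mono (n : ℕ) {T T' : ℤ} (h : T ≤ T') : A n T ≤ A n T' :=
  Set.ncard_le_ncard (fun _ ⟨hl, hq, hT⟩ => ⟨hl, hq, hT.trans h⟩) (W_finite n T')

lemma A_zero_le_one (T : ℤ) : A 0 T ≤ 1 :=
  (Set.ncard_le_ncard (t := {[]}) fun _ hx => List.length_eq_zero_iff.mp hx.1).trans_eq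
    (Set.ncard_singleton _)

lemma four_pow_le_A (L : ℕ) : 4 ^ L ≤ A L (4 * L) := by
  let word : (Fin L → Fin 4) → List ℤ := fun f => List.ofFn fun i => ((f i : ℕ) : ℤ) + 1
  have hword : Function.Injective word := fun f g h => by
    funext i
    have := congrFun (List.ofFn_injective h) i
    exact Fin.ext (by omega)
  have hQ (f : Fin L → Fin 4) : IsQ (word f) := by
    intro a ha
    obtain ⟨i, rfl⟩ := List.mem_ofFn.mp ha
    have := (f i).isLt
    omega
  calc 4 ^ L = (Set.range word).ncard := by simp [Set.ncard_range_of_injective hword]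
    _ ≤ A L (4 * L) := by
      refine Set.ncard_le_ncard ?_ (W_finite _ _)
      rintro _ ⟨f, rfl⟩
      have hlen : (word f).length = L := List.length_ofFn
      refine ⟨hlen, hQ f, ?_⟩
      exact_mod_cast hlen ▸ (hQ f).synTime_le

lemma A_mul_le (a b : ℕ) (s t : ℤ) : A a s * A b t ≤ A (a + b) (s + 3 + t) := by
  have hinj : Set.InjOn (fun p : List ℤ × List ℤ => p.1 ++ p.2) (W a s ×ˢ W b t) :=
    fun p hp q hq h => by
      obtain ⟨h1, h2⟩ := List.append_inj h (hp.1.1.trans hq.1.1.symm)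
      exact Prod.ext h1 h2
  rw [A, A, ← Set.ncard_prod, ← hinj.ncard_image]
  refine Set.ncard_le_ncard ?_ (W_finite _ _)
  rintro _ ⟨⟨x, y⟩, ⟨⟨hx, qx, sx⟩, ⟨hy, qy, ty⟩⟩, rfl⟩
  dsimp only at *
  refine ⟨by simp [hx, hy], qx.append qy, ?_⟩
  have := synTime_append_le qx qy
  omega

lemma A_pow_succ_le (k ℓ : ℕ) (t : ℤ) :
    A k t ^ (ℓ + 1) ≤ A ((ℓ + 1) * k) ((ℓ + 1) * t + 3 * ℓ) := by
  induction ℓ with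
  | zero => simp
  | succ ℓ ih =>
    calc A k t ^ (ℓ + 1 + 1) = A k t ^ (ℓ + 1) * A k t := pow_succ _ _
      _ ≤ A ((ℓ + 1) * k) ((ℓ + 1) * t + 3 * ℓ) * A k t := Nat.mul_le_mul_right _ ih
      _ ≤ A ((ℓ + 1) * k + k) ((ℓ + 1) * t + 3 * ℓ + 3 + t) := A_mul_le _ _ _ _
      _ = A ((ℓ + 1 + 1) * k) ((ℓ + 1 + 1) * t + 3 * (ℓ + 1 : ℕ)) := by
        congr 1 <;> push_cast <;> ring

lemma four_pow_mul_A_pow_le (k ℓ r : ℕ) (t : ℤ) (hℓ : 0 < ℓ) :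
    4 ^ r * A k t ^ ℓ ≤ A (ℓ * k + r) (ℓ * t + 3 * ℓ + 4 * r) := by
  obtain ⟨ℓ, rfl⟩ := Nat.exists_eq_add_one_of_ne_zero hℓ.ne'
  calc 4 ^ r * A k t ^ (ℓ + 1) ≤ A ((ℓ + 1) * k) ((ℓ + 1) * t + 3 * ℓ) * A r (4 * r) := by
        rw [mul_comm]
        exact Nat.mul_le_mul (A_pow_succ_le k ℓ t) (four_pow_le_A r)
    _ ≤ A ((ℓ + 1) * k + r) ((ℓ + 1) * t + 3 * ℓ + 3 + (4 * r : ℕ)) := A_mul_le _ _ _ _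
    _ = A ((ℓ + 1) * k + r) ((ℓ + 1 : ℕ) * t + 3 * (ℓ + 1 : ℕ) + 4 * r) := by
        congr 1; push_cast; ring

lemma ne_zero_of_one_le_log_A {k : ℕ} {t : ℤ} (h : 1 ≤ Nat.log 2 (A k t)) : k ≠ 0 := by
  rintro rfl
  have : Nat.log 2 (A 0 t) = 0 :=
    Nat.log_eq_zero_iff.mpr (Or.inl (Nat.lt_succ_of_le (A_zero_le_one t)))
  omega

lemma mul_two_pow_le_A {n ℓ k c m : ℕ} {t T : ℤ} (hℓ : 0 < ℓ) (hn : ℓ * k + (c + 3) = n)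
    (hc : n ≤ 4 ^ c) (hT : ℓ * t + 3 * ℓ + 4 * (c + 3 : ℕ) ≤ T) (hm : 2 ^ m ≤ A k t) :
    n * 4 * 2 ^ (ℓ * m) ≤ A n T :=
  calc n * 4 * 2 ^ (ℓ * m) ≤ 4 ^ (c + 3) * A k t ^ ℓ := by
        rw [pow_mul']
        gcongr
        calc n * 4 ≤ 4 ^ c * 4 := by gcongr
          _ ≤ 4 ^ (c + 3) := by rw [pow_add]; gcongr; norm_num
    _ ≤ A (ℓ * k + (c + 3)) (ℓ * t + 3 * ℓ + 4 * (c + 3 : ℕ)) := four_pow_mul_A_pow_le _ _ _ _ hℓ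
    _ ≤ A n T := hn ▸ A_mono _ hT

lemma vtSyn_cons (c : ℕ) (w : List ℕ) : vtSyn (c :: w) = c + w.sum + vtSyn w := by
  have hsum : ∑ i ∈ Finset.range w.length, w.getD i 0 = w.sum := by
    induction w with
    | nil => simp
    | cons d w ih =>
      simp only [List.length_cons, Finset.sum_range_succ', List.getD_cons_succ,
        List.getD_cons_zero, ih, List.sum_cons]
      ring
  simp only [vtSyn, List.length_cons, Finset.sum_range_succ', List.getD_cons_succ,
    List.getD_cons_zero, add_mul, Finset.sum_add_distrib, one_mul, hsum]
  ring

lemma vtSyn_append (p q : List ℕ) : vtSyn (p ++ q) = vtSyn p + p.length * q.sum + vtSyn q := by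
  induction p with
  | nil => simp [vtSyn]
  | cons c p ih =>
    simp only [List.cons_append, vtSyn_cons, ih, List.sum_append, List.length_cons]
    ring

/-- Inserting `b` after `P` shifts every entry of `R` one place to the right. -/
lemma vtSyn_insert (P R : List ℕ) (b : ℕ) :
    vtSyn (P ++ b :: R) = vtSyn (P ++ R) + ((P.length + 1) * b + R.sum) := by
  simp only [vtSyn_append, vtSyn_cons, List.sum_cons]
  ring

/-- Equal insertion weights force both insertions into one run of equal bits. -/
lemma append_cons_eq_of_weight_eq {P mid Q : List ℕ} {b₁ b₂ : ℕ}
    (hmid : ∀ c ∈ mid, c ≤ 1) (hb₁ : b₁ ≤ 1) (hb₂ : b₂ ≤ 1)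
    (h : (P.length + 1) * b₁ + (mid ++ Q).sum = ((P ++ mid).length + 1) * b₂ + Q.sum) :
    P ++ b₁ :: (mid ++ Q) = P ++ mid ++ b₂ :: Q := by
  replace h : (P.length + 1) * b₁ + mid.sum = (P.length + mid.length + 1) * b₂ := by
    simp only [List.sum_append, List.length_append] at h
    linarith
  have hsum : mid.sum ≤ mid.length := by simpa using mid.sum_le_card_nsmul 1 hmid
  obtain ⟨rfl, hall⟩ : b₁ = b₂ ∧ ∀ c ∈ mid, c = b₁ := by
    interval_cases b₁ <;> interval_cases b₂
    · exact ⟨rfl, List.sum_eq_zero_iff.mp (by simpa using h)⟩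
    · omega
    · omega
    · refine ⟨rfl, fun c hc => ?_⟩
      by_contra hc1
      have hlt := List.sum_lt_sum id (fun _ => 1) (fun i hi => hmid i hi) ⟨c, hc, by grind⟩
      simp only [List.map_id, List.map_const', List.sum_replicate, smul_eq_mul, mul_one] at hlt
      omega
  rw [List.eq_replicate_iff.mpr ⟨rfl, hall⟩, List.append_assoc, ← List.cons_append,
    ← List.replicate_succ, List.replicate_succ']
  simp

section BinaryVT

variable {P₁ Q₁ P₂ Q₂ : List ℕ} {b₁ b₂ : ℕ}

/-- The weight `(P.length + 1) * b + Q.sum` of the insertion is below the modulus, so it is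
recovered exactly from the syndrome. -/
lemma insertion_weight_eq_of_vtSyn_eq (hz : P₁ ++ Q₁ = P₂ ++ Q₂)
    (hbin : ∀ c ∈ P₁ ++ Q₁, c ≤ 1) (hb₁ : b₁ ≤ 1) (hb₂ : b₂ ≤ 1)
    (hvt : (vtSyn (P₁ ++ b₁ :: Q₁) : ZMod ((P₁ ++ Q₁).length + 2)) = vtSyn (P₂ ++ b₂ :: Q₂)) :
    (P₁.length + 1) * b₁ + Q₁.sum = (P₂.length + 1) * b₂ + Q₂.sum := by
  have hlt {P Q : List ℕ} {b : ℕ} (hPQ : P ++ Q = P₁ ++ Q₁) (hb : b ≤ 1) :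
      (P.length + 1) * b + Q.sum < (P₁ ++ Q₁).length + 2 := by
    have hQ : Q.sum ≤ Q.length := by
      simpa using Q.sum_le_card_nsmul 1 fun c hc => hbin c (hPQ ▸ List.mem_append_right P hc)
    rw [← hPQ, List.length_append]
    nlinarith
  rw [vtSyn_insert, vtSyn_insert, ← hz, Nat.cast_add (vtSyn _), Nat.cast_add (vtSyn _),
    add_right_inj, ZMod.natCast_eq_natCast_iff', Nat.mod_eq_of_lt (hlt rfl hb₁),
    Nat.mod_eq_of_lt (hlt hz.symm hb₂)] at hvt
  exact hvt

lemma eq_of_insert_of_vtSyn_eq (hz : P₁ ++ Q₁ = P₂ ++ Q₂)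
    (hbin : ∀ c ∈ P₁ ++ Q₁, c ≤ 1) (hb₁ : b₁ ≤ 1) (hb₂ : b₂ ≤ 1)
    (hvt : (vtSyn (P₁ ++ b₁ :: Q₁) : ZMod ((P₁ ++ Q₁).length + 2)) = vtSyn (P₂ ++ b₂ :: Q₂)) :
    P₁ ++ b₁ :: Q₁ = P₂ ++ b₂ :: Q₂ := by
  have hw := insertion_weight_eq_of_vtSyn_eq hz hbin hb₁ hb₂ hvt
  rcases List.append_eq_append_iff.mp hz with ⟨mid, rfl, rfl⟩ | ⟨mid, rfl, rfl⟩
  · exact append_cons_eq_of_weight_eq (fun c hc => hbin c (by simp [hc])) hb₁ hb₂ hw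
  · exact (append_cons_eq_of_weight_eq (fun c hc => hbin c (by simp [hc])) hb₂ hb₁ hw.symm).symm

end BinaryVT

@[simp]
lemma auxSeq_cons_cons (a b : ℤ) (l : List ℤ) :
    auxSeq (a :: b :: l) = (if a ≤ b then 1 else 0) :: auxSeq (b :: l) := rfl

lemma auxSeq_length (x : List ℤ) : (auxSeq x).length = x.length - 1 := by
  simp [auxSeq]

lemma le_one_of_mem_auxSeq {x : List ℤ} {c : ℕ} (hc : c ∈ auxSeq x) : c ≤ 1 := by
  obtain ⟨i, hi, rfl⟩ := List.getElem_of_mem hc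
  simp only [auxSeq, List.getElem_zipWith]
  split <;> simp

lemma auxSeq_drop (x : List ℤ) (k : ℕ) : (auxSeq x).drop k = auxSeq (x.drop k) := by
  simp [auxSeq, List.drop_zipWith, List.tail_drop]

lemma auxSeq_insert (u : ℤ) : ∀ s t : List ℤ, s ++ t ≠ [] →
    ∃ P b Q, b ≤ 1 ∧ auxSeq (s ++ u :: t) = P ++ b :: Q ∧ auxSeq (s ++ t) = P ++ Q
  | [], [], h => absurd rfl h
  | [], t₀ :: t, _ => ⟨[], if u ≤ t₀ then 1 else 0, auxSeq (t₀ :: t), by split <;> simp, rfl, rfl⟩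
  | [c], [], _ => ⟨[], if c ≤ u then 1 else 0, [], by split <;> simp, rfl, rfl⟩
  | [c], t₀ :: t, _ => by
    by_cases h : (if c ≤ t₀ then 1 else 0) = (if c ≤ u then 1 else 0)
    · exact ⟨[if c ≤ u then 1 else 0], if u ≤ t₀ then 1 else 0, auxSeq (t₀ :: t),
        by split <;> simp, rfl, by simp [h]⟩
    · refine ⟨[], if c ≤ u then 1 else 0, (if c ≤ t₀ then 1 else 0) :: auxSeq (t₀ :: t),
        by split <;> simp, ?_, rfl⟩
      have hbit : (if u ≤ t₀ then 1 else 0) = (if c ≤ t₀ then 1 else 0) := by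
        split_ifs at h ⊢ <;> omega
      simp [hbit]
  | c :: d :: s, t, _ => by
    obtain ⟨P, b, Q, hb, hx, hz⟩ := auxSeq_insert u (d :: s) t (by simp)
    simp only [List.cons_append] at hx hz ⊢
    exact ⟨(if c ≤ d then 1 else 0) :: P, b, Q, hb, by rw [auxSeq_cons_cons, hx]; rfl,
      by rw [auxSeq_cons_cons, hz]; rfl⟩

lemma auxSeq_cons_append_eq {b : ℤ} {t : List ℤ} :
    ∀ {mid : List ℤ} {a : ℤ}, auxSeq (a :: (mid ++ t)) = auxSeq (mid ++ b :: t) →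
      (a ≤ b ∧ ∀ w ∈ mid, a ≤ w ∧ w ≤ b) ∨ (b < a ∧ ∀ w ∈ mid, b < w ∧ w < a)
  | [], a, _ => by simpa using le_or_gt a b
  | m :: mid, a, h => by
    obtain ⟨x, rest, hxr, hx⟩ : ∃ x rest, mid ++ b :: t = x :: rest ∧ (x ∈ mid ∨ x = b) := by
      cases mid with
      | nil => exact ⟨b, t, rfl, Or.inr rfl⟩
      | cons x mid => exact ⟨x, mid ++ b :: t, rfl, Or.inl List.mem_cons_self⟩
    rw [List.cons_append, List.cons_append, hxr, auxSeq_cons_cons, auxSeq_cons_cons,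
      List.cons.injEq, ← hxr] at h
    rcases auxSeq_cons_append_eq h.2 with ⟨hmb, hall⟩ | ⟨hbm, hall⟩
    · have hmx : m ≤ x := by rcases hx with hx | rfl; exacts [(hall x hx).1, hmb]
      have ham : a ≤ m := by by_contra ham; simp [ham, hmx] at h
      exact Or.inl ⟨ham.trans hmb, List.forall_mem_cons.mpr
        ⟨⟨ham, hmb⟩, fun w hw => ⟨ham.trans (hall w hw).1, (hall w hw).2⟩⟩⟩
    · have hxm : x < m := by rcases hx with hx | rfl; exacts [(hall x hx).2, hbm]
      have hma : m < a := by by_contra hma; simp [not_lt.mp hma, not_le.mpr hxm] at h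
      exact Or.inr ⟨hbm.trans hma, List.forall_mem_cons.mpr
        ⟨⟨hbm, hma⟩, fun w hw => ⟨(hall w hw).1, (hall w hw).2.trans hma⟩⟩⟩

lemma exists_eq_append_cons_of_sublist {α : Type*} {z x : List α} (h : z <+ x)
    (hl : z.length + 1 = x.length) : ∃ s v t, x = s ++ v :: t ∧ z = s ++ t := by
  induction h with
  | slnil => simp at hl
  | cons a h _ => exact ⟨[], a, _, rfl, h.eq_of_length (by simpa using hl)⟩
  | cons_cons a _ ih =>
    obtain ⟨s, v, t, rfl, rfl⟩ := ih (by simpa using hl)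
    exact ⟨a :: s, v, t, rfl, rfl⟩

lemma exists_common_sublist_of_sublist {α : Type*} :
    ∀ {w x y : List α}, x <+ w → y <+ w → x.length + 1 = w.length → y.length + 1 = w.length →
      x ≠ y → ∃ z, z <+ x ∧ z <+ y ∧ z.length + 1 = x.length
  | [], _, _, _, _, hxw, _, _ => by simp at hxw
  | c :: w, x, y, hx, hy, hxw, hyw, hne => by
    cases hx with
    | cons _ hx =>
      obtain rfl := hx.eq_of_length (by simpa using hxw)
      cases hy with
      | cons _ hy => exact absurd (hy.eq_of_length (by simpa using hyw)).symm hne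
      | cons_cons _ hy => exact ⟨_, hy, List.sublist_cons_self c _, by simpa using hyw⟩
    | cons_cons _ hx =>
      cases hy with
      | cons _ hy =>
        obtain rfl := hy.eq_of_length (by simpa using hyw)
        exact ⟨_, List.sublist_cons_self c _, hx, rfl⟩
      | cons_cons _ hy =>
        obtain ⟨z, hzx, hzy, hz⟩ := exists_common_sublist_of_sublist hx hy
          (by simpa using hxw) (by simpa using hyw) (fun h => hne (h ▸ rfl))
        exact ⟨c :: z, hzx.cons_cons c, hzy.cons_cons c, by simpa using hz⟩

section VTCode

variable {n : ℕ} {a : ZMod n} {b : ZMod 4}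

lemma VTn.insert_eq {S mid T : List ℤ} {u v : ℤ} (hx : S ++ u :: (mid ++ T) ∈ VTn n a b)
    (hy : S ++ mid ++ v :: T ∈ VTn n a b) : S ++ u :: (mid ++ T) = S ++ mid ++ v :: T := by
  obtain rfl : u = v := by
    have hu := hx.2.1 u (by simp)
    have hv := hy.2.1 v (by simp)
    have h4 := (ZMod.intCast_eq_intCast_iff_dvd_sub _ _ _).mp (hx.2.2.2.trans hy.2.2.2.symm)
    simp only [List.sum_append, List.sum_cons] at h4
    omega
  rcases eq_or_ne mid [] with rfl | hmid
  · simp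
  have haux : auxSeq (S ++ u :: (mid ++ T)) = auxSeq (S ++ mid ++ u :: T) := by
    obtain ⟨P₁, b₁, Q₁, hb₁, hx₁, hz₁⟩ := auxSeq_insert u S (mid ++ T) (by simp [hmid])
    obtain ⟨P₂, b₂, Q₂, hb₂, hx₂, hz₂⟩ := auxSeq_insert u (S ++ mid) T (by simp [hmid])
    have hn : n = (P₁ ++ Q₁).length + 2 := by
      have := List.length_pos_iff.mpr hmid
      rw [← hz₁, auxSeq_length, ← hx.1]
      simp only [List.length_append, List.length_cons]
      omega
    rw [hx₁, hx₂]
    refine eq_of_insert_of_vtSyn_eq (by rw [← hz₁, ← hz₂, List.append_assoc])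
      (fun c hc => le_one_of_mem_auxSeq (hz₁ ▸ hc)) hb₁ hb₂ ?_
    rw [← hn, ← hx₁, ← hx₂, hx.2.2.1, hy.2.2.1]
  have htail := congrArg (List.drop S.length) haux
  rw [auxSeq_drop, auxSeq_drop, List.append_assoc, List.drop_left, List.drop_left] at htail
  have hall : ∀ w ∈ mid, w = u := by
    rcases auxSeq_cons_append_eq htail with ⟨-, h⟩ | ⟨h, -⟩
    · exact fun w hw => le_antisymm (h w hw).2 (h w hw).1
    · exact absurd h (lt_irrefl u)
  rw [List.eq_replicate_iff.mpr ⟨rfl, hall⟩, List.append_assoc, ← List.cons_append,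
    ← List.replicate_succ, List.replicate_succ']
  simp

lemma VTn.eq_of_sublist {x y z : List ℤ} (hx : x ∈ VTn n a b) (hy : y ∈ VTn n a b)
    (hzx : z <+ x) (hzy : z <+ y) (hz : z.length + 1 = n) : x = y := by
  obtain ⟨S₁, u, T₁, rfl, rfl⟩ := exists_eq_append_cons_of_sublist hzx (hz.trans hx.1.symm)
  obtain ⟨S₂, v, T₂, rfl, hST⟩ := exists_eq_append_cons_of_sublist hzy (hz.trans hy.1.symm)
  rcases List.append_eq_append_iff.mp hST with ⟨mid, rfl, rfl⟩ | ⟨mid, rfl, rfl⟩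
  · exact VTn.insert_eq hx hy
  · exact (VTn.insert_eq hy hx).symm

lemma VTn.pairwise_disjoint_ball : (VTn n a b).Pairwise fun x y => Disjoint (ball x) (ball y) := by
  intro x hx y hy hne
  have hlx := hx.1
  have hly := hy.1
  refine Set.disjoint_left.mpr fun w hwx hwy => hne ?_
  rcases hwx with rfl | ⟨hwx, hsx⟩ | ⟨hwx, -, hsx⟩ <;>
    rcases hwy with rfl | ⟨hwy, hsy⟩ | ⟨hwy, -, hsy⟩
  · rfl
  all_goals try omega
  · exact VTn.eq_of_sublist hx hy hsx hsy (by omega)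
  · obtain ⟨z, hzx, hzy, hz⟩ := exists_common_sublist_of_sublist hsx hsy hwx hwy hne
    exact VTn.eq_of_sublist hx hy hzx hzy (by omega)

end VTCode

lemma exists_le_ncard_VTnT {n M : ℕ} [NeZero n] (T : ℤ) (h : n * 4 * M ≤ A n T) :
    ∃ a b, M ≤ (VTnT n a b T).ncard := by
  classical
  let syndrome : List ℤ → ZMod n × ZMod 4 := fun x => (vtSyn (auxSeq x), x.sum)
  obtain ⟨p, -, hp⟩ := Finset.exists_le_card_fiber_of_mul_le_card_of_maps_to
    (s := (W_finite n T).toFinset) (f := syndrome) (fun _ _ => Finset.mem_univ _)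
    Finset.univ_nonempty
    (by simpa [ZMod.card, A, Set.ncard_eq_toFinset_card _ (W_finite n T)] using h)
  refine ⟨p.1, p.2, hp.trans_eq ?_⟩
  rw [← Set.ncard_coe_finset]
  congr 1
  ext x
  simp only [Finset.coe_filter, Set.Finite.mem_toFinset, W, VTnT, VTn, Prod.ext_iff, syndrome,
    Set.mem_ofPred_eq]
  tauto

/-- the block encoder. For sufficiently large `n`: if `ℓ` divides
`n - ⌈log₄ n⌉ - 3`, `k = (n - ⌈log₄ n⌉ - 3)/ℓ`, `ε = 4(⌈log₄ n⌉ + ℓ + 3)`,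
`ε < T ≤ 4n` with `ℓ ∣ T - ε`, and `m = ⌊log₂ A(k,(T-ε)/ℓ)⌋ ≥ 1`, then there is
an `(n,T,B)`-synthesis code `C ⊆ Σ^n` with `|C| ≥ 2^{ℓm}`. -/
theorem exists_block_encoder_code :
    ∃ N : ℕ, ∀ n ℓ : ℕ, N ≤ n → 0 < ℓ →
      ℓ ∣ (n - Nat.clog 4 n - 3) →
      ∀ T : ℤ, ((4 * (Nat.clog 4 n + ℓ + 3) : ℕ) : ℤ) < T → T ≤ 4 * n →
      (ℓ : ℤ) ∣ (T - ((4 * (Nat.clog 4 n + ℓ + 3) : ℕ) : ℤ)) →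
      ∀ m : ℕ,
        m = Nat.log 2 (A ((n - Nat.clog 4 n - 3) / ℓ)
              ((T - ((4 * (Nat.clog 4 n + ℓ + 3) : ℕ) : ℤ)) / (ℓ : ℤ))) →
        1 ≤ m →
      ∃ C : Set (List ℤ),
        (∀ x ∈ C, x.length = n ∧ IsQ x) ∧
        (∀ x ∈ C, (synTime x : ℤ) ≤ T) ∧
        (C.Pairwise fun x y => Disjoint (ball x) (ball y)) ∧
        2 ^ (ℓ * m) ≤ C.ncard := by
  -- `1 ≤ m` forces `k ≠ 0`, which already makes `n` large enough.
  refine ⟨0, fun n ℓ _ hℓ hdvd T _ _ hdvdT m hm hm1 => ?_⟩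
  set c := Nat.clog 4 n
  set k := (n - c - 3) / ℓ
  set t := (T - ((4 * (c + ℓ + 3) : ℕ) : ℤ)) / ℓ
  have h2m : 2 ^ m ≤ A k t := hm ▸ Nat.pow_log_le_self 2 fun h => by
    rw [h, Nat.log_zero_right] at hm
    omega
  have hk : k ≠ 0 := ne_zero_of_one_le_log_A (hm ▸ hm1)
  have hn : ℓ * k + (c + 3) = n := by
    have : ℓ * k = n - c - 3 := Nat.mul_div_cancel' hdvd
    have := Nat.mul_pos hℓ (Nat.pos_of_ne_zero hk)
    omega
  have hT : ℓ * t + 3 * ℓ + 4 * (c + 3 : ℕ) ≤ T := by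
    have : ℓ * t = T - ((4 * (c + ℓ + 3) : ℕ) : ℤ) := Int.mul_ediv_cancel' hdvdT
    push_cast at this ⊢
    omega
  have : NeZero n := ⟨by omega⟩
  obtain ⟨a, b, hab⟩ := exists_le_ncard_VTnT T
    (mul_two_pow_le_A hℓ hn (Nat.le_pow_clog (by norm_num) n) hT h2m)
  exact ⟨VTnT n a b T, fun x hx => ⟨hx.1.1, hx.1.2.1⟩, fun x hx => hx.2,
    VTn.pairwise_disjoint_ball.mono (Set.sep_subset _ _), hab⟩
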